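/- Let θ ∈ (0, π) and define y₁(x) := cos(θ⌊x⌋)(x - ⌊x⌋) + [cos(θ⌊x⌋)(cos θ - 1) + sin(θ⌊x⌋) sin θ] / (2(1 - cos θ)). Then y₁ is continuous on ℝ (in particular at every integer) and satisfies the ultra-discrete equation y₁(x+1) + y₁(x-1) = 2 cos θ · y₁(x) for all x ∈ ℝ. -/

import Mathlib

/-- The real part of the formal complex solution
`Y(x) = e^{iθ⌊x⌋}(x - ⌊x⌋ + 1/(e^{iθ} - 1))`. -/
noncomputable def y1 (θ : ℝ) (x : ℝ) : ℝ :=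
  Real.cos (θ * ⌊x⌋) * (x - ⌊x⌋) +
    (Real.cos (θ * ⌊x⌋) * (Real.cos θ - 1) + Real.sin (θ * ⌊x⌋) * Real.sin θ) /
      (2 * (1 - Real.cos θ))

/-!
On each interval `[n, n + 1)` the function `y₁` is affine with slope `a n = cos (θ n)` and
value `b n` at `n`. Both `a` and `b` are combinations of `cos (θ n)` and `sin (θ n)`, hence
solve `u (n + 1) + u (n - 1) = 2 cos θ · u n`, and this recurrence passes to the interpolant.
Continuity at the integers is the matching condition `a n + b n = b (n + 1)`, which is where
the constant `1 / (e^{iθ} - 1)` (with real part `-1/2`) comes from.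
-/

open Real

noncomputable def floorAffine (a b : ℝ → ℝ) (x : ℝ) : ℝ :=
  a ⌊x⌋ * Int.fract x + b ⌊x⌋

section floorAffine

variable {a b : ℝ → ℝ}

theorem continuous_floorAffine (ha : Continuous a) (hb : Continuous b)
    (hab : ∀ s, a s + b s = b (s + 1)) : Continuous (floorAffine a b) := by
  -- `floorAffine a b x` is this function at `(x, fract x)`, since `x - fract x = ⌊x⌋`.
  have hpiece : ContinuousOn (Function.uncurry fun x t => a (x - t) * t + b (x - t))
      (Set.univ ×ˢ Set.Icc 0 1) := by
    fun_prop
  have hglue : ∀ x : ℝ, a (x - 0) * 0 + b (x - 0) = a (x - 1) * 1 + b (x - 1) := fun x => by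
    simpa [sub_add_cancel] using (hab (x - 1)).symm
  convert hpiece.comp_fract continuous_id hglue using 2 with x
  simp [floorAffine, Int.self_sub_fract]

theorem floorAffine_add_one_add_sub_one {c : ℝ}
    (ha : ∀ s, a (s + 1) + a (s - 1) = c * a s) (hb : ∀ s, b (s + 1) + b (s - 1) = c * b s)
    (x : ℝ) : floorAffine a b (x + 1) + floorAffine a b (x - 1) = c * floorAffine a b x := by
  simp only [floorAffine, Int.floor_add_one, Int.floor_sub_one, Int.fract_add_one,
    Int.fract_sub_one, Int.cast_add, Int.cast_sub, Int.cast_one]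
  linear_combination Int.fract x * ha ⌊x⌋ + hb ⌊x⌋

end floorAffine

theorem cos_mul_add_one_add_cos_mul_sub_one (θ s : ℝ) :
    cos (θ * (s + 1)) + cos (θ * (s - 1)) = 2 * cos θ * cos (θ * s) := by
  rw [mul_add, mul_sub, mul_one, cos_add, cos_sub]
  ring

theorem sin_mul_add_one_add_sin_mul_sub_one (θ s : ℝ) :
    sin (θ * (s + 1)) + sin (θ * (s - 1)) = 2 * cos θ * sin (θ * s) := by
  rw [mul_add, mul_sub, mul_one, sin_add, sin_sub]
  ring

noncomputable def y1Node (θ s : ℝ) : ℝ :=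
  (cos (θ * s) * (cos θ - 1) + sin (θ * s) * sin θ) / (2 * (1 - cos θ))

theorem y1_eq_floorAffine (θ : ℝ) : y1 θ = floorAffine (fun s => cos (θ * s)) (y1Node θ) := by
  ext x
  rw [y1, floorAffine, y1Node, Int.fract]

theorem y1Node_add_one_add_sub_one (θ s : ℝ) :
    y1Node θ (s + 1) + y1Node θ (s - 1) = 2 * cos θ * y1Node θ s := by
  simp only [y1Node, ← add_div, mul_div_assoc']
  congr 1
  linear_combination (cos θ - 1) * cos_mul_add_one_add_cos_mul_sub_one θ s +
    sin θ * sin_mul_add_one_add_sin_mul_sub_one θ s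

theorem cos_mul_add_y1Node {θ : ℝ} (hθ : cos θ ≠ 1) (s : ℝ) :
    cos (θ * s) + y1Node θ s = y1Node θ (s + 1) := by
  have hD : 2 * (1 - cos θ) ≠ 0 := mul_ne_zero two_ne_zero (sub_ne_zero.2 hθ.symm)
  rw [y1Node, y1Node, mul_add, mul_one, cos_add, sin_add]
  field_simp
  linear_combination -cos (θ * s) * sin_sq_add_cos_sq θ

/-- For `θ ∈ (0, π)`, `y₁` is continuous on ℝ and satisfies the ultra-discrete
equation `y₁(x+1) + y₁(x-1) = 2 cos θ · y₁(x)`. -/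
theorem stmt19 (θ : ℝ) (hθ : θ ∈ Set.Ioo 0 Real.pi) :
    Continuous (y1 θ) ∧
    ∀ x : ℝ, y1 θ (x + 1) + y1 θ (x - 1) = 2 * Real.cos θ * y1 θ x := by
  obtain ⟨hθ₀, hθπ⟩ := hθ
  have hcos : cos θ ≠ 1 := fun h => hθ₀.ne' <|
    (cos_eq_one_iff_of_lt_of_lt (by linarith [pi_pos]) (by linarith [pi_pos])).1 h
  rw [y1_eq_floorAffine]
  refine ⟨continuous_floorAffine (by fun_prop) ?_ (cos_mul_add_y1Node hcos), ?_⟩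
  · unfold y1Node
    fun_prop
  · exact floorAffine_add_one_add_sub_one (cos_mul_add_one_add_cos_mul_sub_one θ)
      (y1Node_add_one_add_sub_one θ)
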